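/- Let S_i, S_j : [t_0, t_1] → ℝ be C¹ with S_i(t_0) = S_j(t_0) = 0, S_i(t_1⁻) = θ_i, derivatives satisfying 0 < g_min ≤ S_j' and S_i' ≤ g_max, where g_min := min over all cells of min g, g_max := max over all cells of max g. Then S_j(t_1⁻) ≥ (g_min · min_k θ_k)/g_max. Moreover, if (min_k θ_k · g_min)/(max_k θ_k · g_max) > 1 − (min_{i≠j} Δ_{i,j})/(max_k θ_k), then S_j(t_1⁻) + min_{i≠j} Δ_{i,j} ≥ θ_j. -/

import Mathlib

/-! Cell `i` climbs from `0` to `θᵢ` at rate at most `g_max`, so the interval lasts at least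
`θᵢ / g_max`; over that time cell `j` gains at least `g_min` per unit time. The similarity
condition says exactly that this gain exceeds `θ_max - Δ_min`. -/

open Set

theorem sub_le_mul_sub_of_hasDerivAt_le {f f' : ℝ → ℝ} {a b C : ℝ} (hab : a ≤ b)
    (hf : ∀ t ∈ Icc a b, HasDerivAt f (f' t) t) (hle : ∀ t ∈ Icc a b, f' t ≤ C) :
    f b - f a ≤ C * (b - a) := by
  have hint : interior (Icc a b) ⊆ Icc a b := interior_subset
  refine (convex_Icc a b).image_sub_le_mul_sub_of_deriv_le
    (fun t ht ↦ (hf t ht).continuousAt.continuousWithinAt)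
    (fun t ht ↦ (hf t (hint ht)).differentiableAt.differentiableWithinAt)
    (fun t ht ↦ ?_) a (left_mem_Icc.2 hab) b (right_mem_Icc.2 hab) hab
  rw [(hf t (hint ht)).deriv]
  exact hle t (hint ht)

theorem mul_sub_le_sub_of_le_hasDerivAt {f f' : ℝ → ℝ} {a b C : ℝ} (hab : a ≤ b)
    (hf : ∀ t ∈ Icc a b, HasDerivAt f (f' t) t) (hle : ∀ t ∈ Icc a b, C ≤ f' t) :
    C * (b - a) ≤ f b - f a := by
  have hneg := sub_le_mul_sub_of_hasDerivAt_le hab (fun t ht ↦ (hf t ht).neg)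
    (fun t ht ↦ neg_le_neg (hle t ht))
  simp only [Pi.neg_apply] at hneg
  linarith

theorem sub_lt_div_of_one_sub_div_lt_div_mul {a b c d : ℝ} (hb : 0 < b)
    (h : 1 - d / b < a / (b * c)) : b - d < a / c := by
  rwa [mul_comm b, ← div_div, one_sub_div hb.ne', div_lt_div_iff_of_pos_right hb] at h

theorem stmt15_general (Si Sj : ℝ → ℝ) (t0 t1 : ℝ) (ht : t0 < t1)
    (θi θj θmin θmax gmin gmax Δmin : ℝ)
    (hθj : 0 < θj)
    (hθmini : θmin ≤ θi)
    (hθmaxj : θj ≤ θmax)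
    (hg : 0 < gmin) (hgm : gmin ≤ gmax)
    (gi gj : ℝ → ℝ)
    (hSi : ∀ t ∈ Set.Icc t0 t1, HasDerivAt Si (gi t) t)
    (hSj : ∀ t ∈ Set.Icc t0 t1, HasDerivAt Sj (gj t) t)
    (hgi : ∀ t ∈ Set.Icc t0 t1, gi t ≤ gmax)
    (hgj : ∀ t ∈ Set.Icc t0 t1, gmin ≤ gj t)
    (hSi0 : Si t0 = 0) (hSj0 : Sj t0 = 0)
    (hSi1 : Si t1 = θi) :
    Sj t1 ≥ gmin * θmin / gmax ∧
    ((θmin * gmin) / (θmax * gmax) > 1 - Δmin / θmax → Sj t1 + Δmin ≥ θj) := by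
  have hgmax : 0 < gmax := hg.trans_le hgm
  have hslow : θi ≤ gmax * (t1 - t0) := by
    simpa [hSi0, hSi1] using sub_le_mul_sub_of_hasDerivAt_le ht.le hSi hgi
  have hfast : gmin * (t1 - t0) ≤ Sj t1 := by
    simpa [hSj0] using mul_sub_le_sub_of_le_hasDerivAt ht.le hSj hgj
  have hreach : gmin * θmin / gmax ≤ Sj t1 :=
    calc gmin * θmin / gmax ≤ gmin * θi / gmax := by gcongr
      _ ≤ gmin * (t1 - t0) := by
        rw [mul_div_assoc]
        exact mul_le_mul_of_nonneg_left ((div_le_iff₀' hgmax).2 hslow) hg.le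
      _ ≤ Sj t1 := hfast
  refine ⟨hreach, fun hsim ↦ ?_⟩
  have hgain := sub_lt_div_of_one_sub_div_lt_div_mul (hθj.trans_le hθmaxj) hsim
  rw [mul_comm θmin] at hgain
  linarith

/-- During an inter-spike interval [t₀,t₁] in which cell i goes
from 0 to its threshold θ_i with derivative ≤ g_max, any other cell j with
derivative ≥ g_min > 0 reaches S_j(t₁⁻) ≥ g_min·(min θ)/g_max; under the
similarity hypothesis, S_j(t₁⁻) + min Δ ≥ θ_j. -/
theorem stmt15 (Si Sj : ℝ → ℝ) (t0 t1 : ℝ) (ht : t0 < t1)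
    (θi θj θmin θmax gmin gmax Δmin : ℝ)
    (hθi : 0 < θi) (hθj : 0 < θj)
    (hθmin : 0 < θmin) (hθmini : θmin ≤ θi) (hθminj : θmin ≤ θj)
    (hθmaxi : θi ≤ θmax) (hθmaxj : θj ≤ θmax)
    (hg : 0 < gmin) (hgm : gmin ≤ gmax)
    (hΔmin : 0 < Δmin)
    (gi gj : ℝ → ℝ)
    (hSi : ∀ t ∈ Set.Icc t0 t1, HasDerivAt Si (gi t) t)
    (hSj : ∀ t ∈ Set.Icc t0 t1, HasDerivAt Sj (gj t) t)
    (hgi : ∀ t ∈ Set.Icc t0 t1, gi t ≤ gmax)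
    (hgj : ∀ t ∈ Set.Icc t0 t1, gmin ≤ gj t)
    (hSi0 : Si t0 = 0) (hSj0 : Sj t0 = 0)
    (hSi1 : Si t1 = θi) :
    Sj t1 ≥ gmin * θmin / gmax ∧
    ((θmin * gmin) / (θmax * gmax) > 1 - Δmin / θmax → Sj t1 + Δmin ≥ θj) :=
  stmt15_general Si Sj t0 t1 ht θi θj θmin θmax gmin gmax Δmin hθj hθmini hθmaxj hg hgm gi gj hSi
    hSj hgi hgj hSi0 hSj0 hSi1
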